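/- Let κ be an uncountable cardinal with cofinality ω and X a completely metrizable space with wt(X) = κ. If some closed subspace of X is not locally <κ-like, then cov(X) = cf([κ]^{ℵ₀}, ⊆), where cov(X) is the least cardinality of a covering of X by Polish subspaces. -/

import Mathlib

/-!
Upper bound: index a basis of `X` by `A`. For countable `s ⊆ A` the closure of sample points of
the basic sets indexed by `s` is separable and complete, hence Polish, and a point `x` lies in it
as soon as `s` contains the indices of a sequence of basic neighbourhoods of `x` shrinking to `x`.

Lower bound: `cf κ = ω` writes `A` as an increasing union of sets `Aₙ` with `|Aₙ| < κ`. In a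
nonempty open subset of `K` all of whose nonempty open subsets have weight `≥ κ`, every open set
contains `|Aₙ|` uniformly separated points, so a Cantor scheme splitting the `n`-th level into
`|Aₙ|` uniformly separated pieces induces `φ : ∏ₙ Aₙ → K` whose value near `φ b` determines each
coordinate of `b`. Hence a separable `Y ⊆ X` meets the images of branches using only countably
many elements of `A`, while every countable subset of `A` is covered by the coordinates of a
single branch; so a cover of `X` by Polish sets yields a cofinal family in `[A]^{ℵ₀}`.
-/

open Cardinal Set TopologicalSpace

/-- The weight of a topological space: the least cardinality of a basis. -/
noncomputable def tweight (X : Type*) [TopologicalSpace X] : Cardinal :=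
  sInf { c | ∃ B : Set (Set X), IsTopologicalBasis B ∧ #B = c }

/-- A space is locally `<κ`-like if every nonempty open subset contains a nonempty
open subset of weight `< κ`. -/
def LocallyLtLike (Z : Type*) [TopologicalSpace Z] (κ : Cardinal) : Prop :=
  ∀ U : Set Z, IsOpen U → U.Nonempty →
    ∃ V : Set Z, IsOpen V ∧ V.Nonempty ∧ V ⊆ U ∧ tweight V < κ

/-- The least cardinality of a covering of `X` by Polish subspaces. -/
noncomputable def covPolish (X : Type) [TopologicalSpace X] : Cardinal :=
  sInf { c | ∃ F : Set (Set X), (∀ Y ∈ F, PolishSpace Y) ∧ ⋃₀ F = Set.univ ∧ #F = c }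

/-- The least cardinality of a family of countably infinite subsets of `A` that is
cofinal in `([A]^{ℵ₀}, ⊆)`. -/
noncomputable def cofCountableSubsets (A : Type*) : Cardinal :=
  sInf { c | ∃ D : Set (Set A), (∀ s ∈ D, s.Countable ∧ s.Infinite) ∧
    (∀ t : Set A, t.Countable → t.Infinite → ∃ s ∈ D, t ⊆ s) ∧ #D = c }

universe u

theorem exists_monotone_cover_mk_lt {A : Type u} (hA : ℵ₀ ≤ #A) (hcf : (#A).ord.cof = ℵ₀) :
    ∃ L : ℕ → Set A, Monotone L ∧ (∀ a, ∃ n, a ∈ L n) ∧ (∀ n, (L n).Nonempty) ∧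
      ∀ n, #(L n) < #A := by
  obtain ⟨s, hs, hscard⟩ := Order.exists_cof_eq (#A).ord.ToType
  rw [Ordinal.cof_toType, hcf] at hscard
  obtain ⟨g, rfl⟩ := (le_aleph0_iff_set_countable.1 hscard.le).exists_eq_range
    (nonempty_coe_sort.1 <| mk_ne_zero_iff.1 <| hscard ▸ aleph0_ne_zero)
  obtain ⟨e⟩ : Nonempty (A ≃ (#A).ord.ToType) := by rw [← Cardinal.eq, mk_toType, card_ord]
  refine ⟨fun n => e ⁻¹' Iic (partialSups g n), fun m n hmn => ?_, fun a => ?_,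
    fun n => ⟨e.symm (partialSups g n), by simp⟩, fun n => ?_⟩
  · exact preimage_mono (Iic_subset_Iic.2 ((partialSups g).monotone hmn))
  · obtain ⟨_, ⟨n, rfl⟩, hn⟩ := hs (e a)
    exact ⟨n, hn.trans (le_partialSups g n)⟩
  · rw [mk_preimage_equiv, ← Iio_insert]
    have hIio : #(Iio (partialSups g n)) < #A := by
      simpa using mk_Iio_lt (partialSups g n) (by simp)
    exact mk_insert_le.trans_lt (add_lt_of_lt hA hIio (one_lt_aleph0.trans_le hA))

theorem exists_mem_pi_subset_range {A : Type*} {L : ℕ → Set A} (hmono : Monotone L)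
    (hcov : ∀ a, ∃ n, a ∈ L n) (hne : ∀ n, (L n).Nonempty) {t : Set A} (ht : t.Countable) :
    ∃ b ∈ univ.pi L, t ⊆ range b := by
  choose c hc using hne
  choose level hlevel using hcov
  obtain ⟨f, hf⟩ := (ht.insert (c 0)).exists_eq_range (insert_nonempty _ _)
  -- `f k` is placed at position `pair (level (f k)) k`, which lies beyond its level
  set m : ℕ → ℕ := fun k => Nat.pair (level (f k)) k
  have hm : m.Injective := fun k k' h => (Nat.pair_eq_pair.1 h).2
  refine ⟨Function.extend m f c, fun n _ => ?_, ?_⟩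
  · by_cases hn : ∃ k, m k = n
    · obtain ⟨k, rfl⟩ := hn
      rw [hm.extend_apply]
      exact hmono (Nat.left_le_pair _ _) (hlevel (f k))
    · rw [Function.extend_apply' _ _ _ hn]
      exact hc n
  · rintro a ha
    obtain ⟨k, rfl⟩ : a ∈ range f := hf ▸ mem_insert_of_mem _ ha
    exact ⟨m k, hm.extend_apply _ _ _⟩

theorem exists_countable_cofinal_family_mk_eq (A : Type*) [Infinite A] :
    ∃ D : Set (Set A), (∀ s ∈ D, s.Countable) ∧ (∀ t : Set A, t.Countable → ∃ s ∈ D, t ⊆ s) ∧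
      #D = cofCountableSubsets A := by
  obtain ⟨D, hD, hcof, hcard⟩ := csInf_mem (α := Cardinal) (s := {c | ∃ D : Set (Set A),
      (∀ s ∈ D, s.Countable ∧ s.Infinite) ∧
      (∀ t : Set A, t.Countable → t.Infinite → ∃ s ∈ D, t ⊆ s) ∧ #D = c})
    ⟨_, {s | s.Countable ∧ s.Infinite}, fun _ hs => hs,
      fun t htc hti => ⟨t, ⟨htc, hti⟩, subset_rfl⟩, rfl⟩
  have hs₀ : (range (Infinite.natEmbedding A)).Infinite :=
    infinite_range_of_injective (Infinite.natEmbedding A).injective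
  refine ⟨D, fun s hs => (hD s hs).1, fun t ht => ?_, hcard⟩
  obtain ⟨s, hs, hts⟩ := hcof _ (ht.union (countable_range _)) (hs₀.mono subset_union_right)
  exact ⟨s, hs, subset_union_left.trans hts⟩

theorem cofCountableSubsets_le_mk {A : Type*} [Infinite A] {D : Set (Set A)}
    (hD : ∀ s ∈ D, s.Countable) (hcof : ∀ t : Set A, t.Countable → ∃ s ∈ D, t ⊆ s) :
    cofCountableSubsets A ≤ #D := by
  set s₀ := range (Infinite.natEmbedding A)
  have hs₀ : s₀.Infinite := infinite_range_of_injective (Infinite.natEmbedding A).injective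
  refine le_trans (csInf_le' ?_) (mk_image_le (f := (· ∪ s₀)) (s := D))
  refine ⟨(· ∪ s₀) '' D, ?_, fun t ht _ => ?_, rfl⟩
  · rintro _ ⟨s, hs, rfl⟩
    exact ⟨(hD s hs).union (countable_range _), hs₀.mono subset_union_right⟩
  · obtain ⟨s, hs, hts⟩ := hcof t ht
    exact ⟨s ∪ s₀, mem_image_of_mem _ hs, hts.trans subset_union_left⟩

open Metric NNReal

theorem tweight_le_mk_mul_aleph0_of_dense {Z : Type u} [PseudoMetricSpace Z] {D : Set Z}
    (hD : Dense D) : tweight Z ≤ #D * ℵ₀ := by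
  set f : D × ℕ → Set Z := fun p => ball (p.1 : Z) (1 / (p.2 + 1))
  have hbasis : IsTopologicalBasis (range f) := by
    refine isTopologicalBasis_of_isOpen_of_nhds (by rintro _ ⟨p, rfl⟩; exact isOpen_ball) ?_
    intro x u hx hu
    obtain ⟨r, hr, hxr⟩ := Metric.isOpen_iff.1 hu x hx
    obtain ⟨n, hn⟩ := exists_nat_one_div_lt (half_pos hr)
    obtain ⟨d, hxd, hd⟩ := Metric.dense_iff.1 hD x (1 / (n + 1)) Nat.one_div_pos_of_nat
    refine ⟨f (⟨d, hd⟩, n), mem_range_self _, mem_ball_comm.1 hxd, ?_⟩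
    refine (ball_subset_ball' ?_).trans hxr
    linarith [mem_ball.1 hxd]
  calc tweight Z ≤ #(range f) := csInf_le' ⟨range f, hbasis, rfl⟩
    _ ≤ #(D × ℕ) := mk_range_le
    _ = #D * ℵ₀ := by simp

theorem Metric.exists_maximal_isSeparated {Z : Type*} [PseudoEMetricSpace Z] (ε : ENNReal)
    (s : Set Z) : ∃ N, Maximal (fun N => N ⊆ s ∧ IsSeparated ε N) N := by
  obtain ⟨N, -, hN⟩ := zorn_subset_nonempty {N | N ⊆ s ∧ IsSeparated ε N}
    (fun c hcS hc _ => ⟨⋃₀ c, ⟨sUnion_subset fun N hN => (hcS hN).1,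
      hc.pairwise_sUnion.2 fun N hN => (hcS hN).2⟩, fun _ => subset_sUnion_of_mem⟩)
    ∅ ⟨empty_subset _, .empty⟩
  exact ⟨N, hN⟩

theorem exists_pairwise_le_dist_of_le_tweight {Z : Type u} [PseudoMetricSpace Z]
    {κ : Cardinal.{u}} (hκ : ℵ₀ < κ) (hZ : κ ≤ tweight Z) {ι : Type u} (hι : #ι < κ) :
    ∃ ε > 0, ∃ y : ι → Z, Pairwise fun i j => ε ≤ dist (y i) (y j) := by
  -- otherwise maximal `(q + 1)⁻¹`-separated sets have at most `#ι` points, and their union is a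
  -- dense set of cardinality `< κ`
  by_contra! H
  set ε : ℕ → ℝ≥0 := fun q => (q + 1)⁻¹
  choose N hN using fun q => exists_maximal_isSeparated (ε q) (univ : Set Z)
  have hNcard : ∀ q, #(N q) ≤ #ι := fun q => by
    by_contra! hlt
    obtain ⟨f⟩ := le_def _ _ |>.1 hlt.le
    refine H (ε q) (by positivity) (fun i => f i) fun i j hij => ?_
    have := (hN q).prop.2 (f i).2 (f j).2 (Subtype.coe_injective.ne (f.injective.ne hij))
    exact (not_le.1 (dist_le_coe.not.2 (edist_le_coe.not.1 this.not_ge))).le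
  have hdense : Dense (⋃ q, N q) := by
    refine Metric.dense_iff.2 fun x r hr => ?_
    obtain ⟨q, hq⟩ := exists_nat_one_div_lt hr
    obtain ⟨y, hy, hxy⟩ := (IsCover.of_maximal_isSeparated (hN q)) (mem_univ x)
    refine ⟨y, mem_ball_comm.1 ((dist_le_coe.2 (edist_le_coe.1 hxy)).trans_lt ?_),
      mem_iUnion_of_mem q hy⟩
    simpa [ε] using hq
  have hcard : #(⋃ q, N q) < κ := by
    have := mk_iUnion_le_lift N
    simp only [lift_uzero, mk_nat, lift_aleph0] at this
    exact this.trans_lt (mul_lt_of_lt hκ.le hκ ((ciSup_le' hNcard).trans_lt hι))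
  exact (hZ.trans_lt ((tweight_le_mk_mul_aleph0_of_dense hdense).trans_lt
    (mul_lt_of_lt hκ.le hcard hκ))).false

theorem exists_separated_open_family {M : Type u} [MetricSpace M] {κ : Cardinal.{u}} (hκ : ℵ₀ < κ)
    {V : Set M} (hVo : IsOpen V) (hVne : V.Nonempty) (hV : κ ≤ tweight V)
    {β : Type u} (s : Set β) (hs : #s < κ) {r : ℝ} (hr : 0 < r) :
    ∃ W : β → Set M, (∀ a, IsOpen (W a) ∧ (W a).Nonempty ∧ closure (W a) ⊆ V ∧
        ∀ x ∈ W a, ∀ y ∈ W a, dist x y ≤ r) ∧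
      ∃ ε > 0, s.Pairwise fun a a' => ∀ x ∈ W a, ∀ y ∈ W a', ε ≤ dist x y := by
  classical
  obtain ⟨ε, hε, y, hy⟩ := exists_pairwise_le_dist_of_le_tweight hκ hV hs
  set z : β → V := fun a => if h : a ∈ s then y ⟨a, h⟩ else ⟨_, hVne.some_mem⟩
  have hz : ∀ a ∈ s, ∀ a' ∈ s, a ≠ a' → ε ≤ dist (z a : M) (z a') := fun a ha a' ha' hne => by
    simpa [z, ha, ha', Subtype.dist_eq] using hy (show (⟨a, ha⟩ : s) ≠ ⟨a', ha'⟩ by simpa using hne)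
  choose t ht htV using fun a => Metric.isOpen_iff.1 hVo _ (z a).2
  set ρ : β → ℝ := fun a => min (t a / 2) (min (ε / 4) (r / 2))
  have hρ : ∀ a, 0 < ρ a := fun a => by have := ht a; positivity
  have hρt : ∀ a, ρ a < t a := fun a => (min_le_left _ _).trans_lt (half_lt_self (ht a))
  have hρε : ∀ a, ρ a ≤ ε / 4 := fun a => (min_le_right _ _).trans (min_le_left _ _)
  have hρr : ∀ a, ρ a ≤ r / 2 := fun a => (min_le_right _ _).trans (min_le_right _ _)
  refine ⟨fun a => ball (z a) (ρ a), fun a => ⟨isOpen_ball, nonempty_ball.2 (hρ a), ?_, ?_⟩,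
    ε / 2, half_pos hε, fun a ha a' ha' hne x hx x' hx' => ?_⟩
  · exact closure_ball_subset_closedBall.trans ((closedBall_subset_ball (hρt a)).trans (htV a))
  · intro x hx x' hx'
    linarith [dist_triangle_right x x' (z a), mem_ball.1 hx, mem_ball.1 hx', hρr a]
  · have := hz a ha a' ha' hne
    linarith [dist_triangle4 (z a : M) x x' (z a'), mem_ball'.1 hx, mem_ball.1 hx', hρε a,
      hρε a']

def DeterminesCoordsLocally {M β : Type*} [PseudoMetricSpace M] (φ : (ℕ → β) → M)
    (P : Set (ℕ → β)) : Prop :=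
  ∀ b ∈ P, ∀ n, ∃ δ > 0, ∀ b' ∈ P, dist (φ b) (φ b') < δ → b' n = b n

open CantorScheme PiNat in
theorem CantorScheme.determinesCoordsLocally_inducedMap {M β : Type*} [PseudoMetricSpace M]
    {S : List β → Set M} (hdom : (inducedMap S).1 = Set.univ) {L : ℕ → Set β}
    (hsep : ∀ l : List β, ∃ ε > 0,
      (L l.length).Pairwise fun a a' => ∀ x ∈ S (a :: l), ∀ y ∈ S (a' :: l), ε ≤ dist x y) :
    DeterminesCoordsLocally (fun b => (inducedMap S).2 ⟨b, hdom ▸ mem_univ b⟩) (univ.pi L) := by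
  set φ : (ℕ → β) → M := fun b => (inducedMap S).2 ⟨b, hdom ▸ mem_univ b⟩
  have hφ : ∀ b n, φ b ∈ S (res b n) := fun b n => map_mem _ n
  intro b hb n
  suffices ∀ n, ∃ δ > 0, ∀ b' ∈ univ.pi L, dist (φ b) (φ b') < δ → res b' n = res b n by
    obtain ⟨δ, hδ, h⟩ := this (n + 1)
    exact ⟨δ, hδ, fun b' hb' hd => res_eq_res.1 (h b' hb' hd) n.lt_succ_self⟩
  intro n
  induction n with
  | zero => exact ⟨1, one_pos, fun _ _ _ => rfl⟩
  | succ n ih =>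
    obtain ⟨δ, hδ, hres⟩ := ih
    obtain ⟨ε, hε, hsepn⟩ := hsep (res b n)
    rw [res_length] at hsepn
    refine ⟨min δ ε, lt_min hδ hε, fun b' hb' hd => ?_⟩
    have hn := hres b' hb' (hd.trans_le (min_le_left _ _))
    rw [res_succ, res_succ, hn]
    congr 1
    by_contra hne
    have h1 := res_succ b n ▸ hφ b (n + 1)
    have h2 := hn ▸ res_succ b' n ▸ hφ b' (n + 1)
    exact (hd.trans_le (min_le_right _ _)).not_ge
      (hsepn (hb n trivial) (hb' n trivial) (Ne.symm hne) _ h1 _ h2)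

open CantorScheme PiNat Filter Topology in
theorem exists_determinesCoordsLocally {M : Type u} [MetricSpace M] [CompleteSpace M]
    {κ : Cardinal.{u}} (hκ : ℵ₀ < κ) {U : Set M} (hUo : IsOpen U) (hUne : U.Nonempty)
    (hU : ∀ V : Set M, IsOpen V → V.Nonempty → V ⊆ U → κ ≤ tweight V)
    {β : Type u} (L : ℕ → Set β) (hL : ∀ n, #(L n) < κ) :
    ∃ φ : (ℕ → β) → M, DeterminesCoordsLocally φ (univ.pi L) := by
  classical
  set good : Set M → Prop := fun V => IsOpen V ∧ V.Nonempty ∧ V ⊆ U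
  have hsplit : ∀ (V : Set M) (n : ℕ), ∃ W : β → Set M, good V →
      (∀ a, good (W a) ∧ closure (W a) ⊆ V ∧ ∀ x ∈ W a, ∀ y ∈ W a, dist x y ≤ 1 / (n + 1)) ∧
      ∃ ε > 0, (L n).Pairwise fun a a' => ∀ x ∈ W a, ∀ y ∈ W a', ε ≤ dist x y := by
    intro V n
    by_cases hV : good V
    · obtain ⟨W, hW, hsep⟩ := exists_separated_open_family hκ hV.1 hV.2.1
        (hU V hV.1 hV.2.1 hV.2.2) (L n) (hL n) Nat.one_div_pos_of_nat
      exact ⟨W, fun _ => ⟨fun a => ⟨⟨(hW a).1, (hW a).2.1,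
        subset_closure.trans ((hW a).2.2.1.trans hV.2.2)⟩, (hW a).2.2⟩, hsep⟩⟩
    · exact ⟨fun _ => ∅, fun h => absurd h hV⟩
  choose W hW using hsplit
  let S : List β → Set M := fun l => l.rec U fun a l S => W S l.length a
  have hS_cons : ∀ a l, S (a :: l) = W (S l) l.length a := fun _ _ => rfl
  have hgood : ∀ l, good (S l) := by
    intro l
    induction l with
    | nil => exact ⟨hUo, hUne, subset_rfl⟩
    | cons a l ih => exact ((hW _ _ ih).1 a).1
  have hvanish : VanishingDiam S := fun b => by
    have hlim : Tendsto (fun n : ℕ => ENNReal.ofReal (1 / (n + 1))) atTop (𝓝 0) := by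
      simpa using ENNReal.tendsto_ofReal tendsto_one_div_add_atTop_nhds_zero_nat
    refine (tendsto_add_atTop_iff_nat 1).1 (tendsto_of_tendsto_of_tendsto_of_le_of_le
      tendsto_const_nhds hlim (fun _ => bot_le) fun n => ?_)
    rw [res_succ, hS_cons, res_length]
    exact Metric.ediam_le_of_forall_dist_le ((hW _ _ (hgood _)).1 _).2.2
  have hdom : (inducedMap S).1 = Set.univ := ClosureAntitone.map_of_vanishingDiam hvanish
    (fun l a => ((hW _ _ (hgood l)).1 a).2.1) fun l => (hgood l).2.1
  exact ⟨_, determinesCoordsLocally_inducedMap hdom fun l => (hW _ _ (hgood l)).2⟩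

theorem DeterminesCoordsLocally.countable_biUnion_range {M β : Type*} [PseudoMetricSpace M]
    {φ : (ℕ → β) → M} {P : Set (ℕ → β)} (hφ : DeterminesCoordsLocally φ P) {Y : Set M}
    (hY : IsSeparable Y) : (⋃ b ∈ P ∩ φ ⁻¹' Y, Set.range b).Countable := by
  obtain ⟨t, htsub, htc, hdense⟩ :=
    (hY.mono (image_subset_iff.2 (inter_subset_right (s := P)))).exists_countable_dense_subset
  choose g hg hgt using fun z : t => htsub z.2
  have := htc.to_subtype
  refine (countable_iUnion fun z : t => countable_range (g z)).mono ?_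
  simp only [iUnion_subset_iff, range_subset_iff]
  intro b hb n
  obtain ⟨δ, hδ, hdet⟩ := hφ b hb.1 n
  obtain ⟨z, hz, hdist⟩ := Metric.mem_closure_iff.1 (hdense ⟨b, hb, rfl⟩) δ hδ
  exact mem_iUnion.2 ⟨⟨z, hz⟩, n, hdet _ (hg ⟨z, hz⟩).1 (hgt ⟨z, hz⟩ ▸ hdist)⟩

theorem cofCountableSubsets_le_covPolish {A X : Type} [Infinite A] [MetricSpace X]
    {L : ℕ → Set A} (hmono : Monotone L) (hcov : ∀ a, ∃ n, a ∈ L n) (hne : ∀ n, (L n).Nonempty)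
    {φ : (ℕ → A) → X} (hφ : DeterminesCoordsLocally φ (univ.pi L)) :
    cofCountableSubsets A ≤ covPolish X := by
  obtain ⟨F, hF, hFcov, hFcard⟩ := csInf_mem (α := Cardinal) (s := {c | ∃ F : Set (Set X),
      (∀ Y ∈ F, PolishSpace Y) ∧ ⋃₀ F = Set.univ ∧ #F = c})
    ⟨_, range fun x : X => {x}, by rintro _ ⟨x, rfl⟩; infer_instance,
      sUnion_eq_univ_iff.2 fun x => ⟨{x}, mem_range_self x, rfl⟩, rfl⟩
  set u : Set X → Set A := fun Y => ⋃ b ∈ univ.pi L ∩ φ ⁻¹' Y, range b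
  calc cofCountableSubsets A ≤ #(u '' F) := cofCountableSubsets_le_mk ?_ ?_
    _ ≤ #F := mk_image_le
    _ = covPolish X := hFcard
  · rintro _ ⟨Y, hY, rfl⟩
    have := hF Y hY
    exact hφ.countable_biUnion_range (IsSeparable.of_subtype Y)
  · intro t ht
    obtain ⟨b, hb, htb⟩ := exists_mem_pi_subset_range hmono hcov hne ht
    obtain ⟨Y, hY, hbY⟩ := sUnion_eq_univ_iff.1 hFcov (φ b)
    exact ⟨u Y, mem_image_of_mem u hY,
      htb.trans (subset_biUnion_of_mem (u := fun b => range b) ⟨hb, hbY⟩)⟩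

theorem covPolish_le_cofCountableSubsets {X A : Type} [MetricSpace X] [CompleteSpace X]
    [Infinite A] (hA : tweight X ≤ #A) : covPolish X ≤ cofCountableSubsets A := by
  obtain ⟨B, hB, hBcard⟩ := csInf_mem (α := Cardinal)
    (s := {c | ∃ B : Set (Set X), IsTopologicalBasis B ∧ #B = c})
    ⟨_, _, isTopologicalBasis_opens, rfl⟩
  set B' : Set (Set X) := {v ∈ B | v.Nonempty}
  obtain ⟨ι⟩ : Nonempty (B' ↪ A) :=
    ((mk_le_mk_of_subset (sep_subset B _)).trans (hBcard.le.trans hA))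
  set p : B' → X := fun v => v.2.2.some
  set piece : Set A → Set X := fun s => closure (p '' (ι ⁻¹' s))
  have hpolish : ∀ s : Set A, s.Countable → PolishSpace (piece s) := fun s hs => by
    have := isClosed_closure.completeSpace_coe (s := piece s)
    have := ((hs.preimage ι.injective).image p).isSeparable.closure.separableSpace
    infer_instance
  obtain ⟨D, hD, hcof, hDcard⟩ := exists_countable_cofinal_family_mk_eq A
  calc covPolish X ≤ #(piece '' D) := csInf_le' ⟨piece '' D, ?_, ?_, rfl⟩
    _ ≤ #D := mk_image_le
    _ = cofCountableSubsets A := hDcard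
  · rintro _ ⟨s, hs, rfl⟩
    exact hpolish s (hD s hs)
  · refine sUnion_eq_univ_iff.2 fun x => ?_
    have hbasic : ∀ n : ℕ, ∃ v : B', x ∈ (v : Set X) ∧
        (v : Set X) ⊆ Metric.ball x (1 / (n + 1)) := by
      intro n
      obtain ⟨v, hv, hxv, hvsub⟩ := hB.exists_subset_of_mem_open
        (Metric.mem_ball_self Nat.one_div_pos_of_nat) Metric.isOpen_ball
      exact ⟨⟨v, hv, x, hxv⟩, hxv, hvsub⟩
    choose v hxv hvsub using hbasic
    obtain ⟨s, hs, hvs⟩ := hcof (range (ι ∘ v)) (countable_range _)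
    refine ⟨piece s, mem_image_of_mem _ hs, Metric.mem_closure_iff.2 fun ε hε => ?_⟩
    obtain ⟨n, hn⟩ := exists_nat_one_div_lt hε
    exact ⟨p (v n), mem_image_of_mem _ (hvs (mem_range_self n)),
      (Metric.mem_ball'.1 (hvsub n (v n).2.2.some_mem)).trans hn⟩

/-- If `κ` is uncountable of cofinality `ω` and `X` is a completely metrizable
space of weight `κ` with a closed subspace that is not locally `<κ`-like, then
`cov(X) = cf([κ]^{ℵ₀}, ⊆)`. -/
theorem cov_eq_cof_of_not_locally_small (κ : Cardinal) (hκ : ℵ₀ < κ)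
    (hcf : κ.ord.cof = ℵ₀) (A : Type) (hA : #A = κ)
    (X : Type) [MetricSpace X] [CompleteSpace X] (hw : tweight X = κ)
    (K : Set X) (hK : IsClosed K) (hnot : ¬ LocallyLtLike K κ) :
    covPolish X = cofCountableSubsets A := by
  subst hA
  have : Infinite A := infinite_iff.2 hκ.le
  refine le_antisymm (covPolish_le_cofCountableSubsets hw.le) ?_
  obtain ⟨L, hmono, hcov, hne, hL⟩ := exists_monotone_cover_mk_lt hκ.le hcf
  obtain ⟨U, hUo, hUne, hU⟩ : ∃ U : Set K, IsOpen U ∧ U.Nonempty ∧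
      ∀ V : Set K, IsOpen V → V.Nonempty → V ⊆ U → #A ≤ tweight V := by
    simpa [LocallyLtLike] using hnot
  have := hK.completeSpace_coe
  obtain ⟨φ, hφ⟩ := exists_determinesCoordsLocally hκ hUo hUne hU L hL
  exact cofCountableSubsets_le_covPolish hmono hcov hne (φ := fun b => (φ b : X)) hφ
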